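/- arXiv:2206.06099 — 6 statements merged into one kernel-verified Lean document; each statement's English description precedes it below -/
import Mathlib

section
/- Let M be a compact metric space with Lebesgue covering dimension dim M ≤ s. Then there exists a total order T on M for which Snake(M,T) ≤ 2s + 1. -/
open Metric Set

/-- The pair `(U₁, U₂)` contains a snake of length `s` with respect to the
strict total order `T`: a `T`-increasing sequence `a₀ <_T a₁ <_T ⋯ <_T a_s`
with even-indexed points in `U₁` and odd-indexed points in `U₂`. -/
def HasSnake {M : Type*} (T : M → M → Prop) (U₁ U₂ : Set M) (s : ℕ) : Prop :=
  ∃ a : Fin (s + 1) → M,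
    (∀ i j : Fin (s + 1), i < j → T (a i) (a j)) ∧
    (∀ i : Fin (s + 1), Even (i : ℕ) → a i ∈ U₁) ∧
    (∀ i : Fin (s + 1), Odd (i : ℕ) → a i ∈ U₂)

/-- The snake number `Snake_T(x, y)`: the greatest `s` such that for every `ε > 0`
the pair `(B_ε(x), B_ε(y))` contains a snake of length `s`; `∞` if no greatest exists. -/
noncomputable def snakeNum {M : Type*} [MetricSpace M] (T : M → M → Prop) (x y : M) : ℕ∞ :=
  ⨆ s ∈ {s : ℕ | ∀ ε : ℝ, 0 < ε → HasSnake T (ball x ε) (ball y ε) s}, (s : ℕ∞)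

/-- The snake number `Snake(M, T)` of the ordered metric space: the supremum of
`Snake_T(x, y)` over all pairs of distinct points. -/
noncomputable def snakeNumSpace {M : Type*} [MetricSpace M] (T : M → M → Prop) : ℕ∞ :=
  ⨆ (x : M) (y : M) (_ : x ≠ y), snakeNum T x y

/-- The Lebesgue covering dimension of `M` is at most `n`: every finite open cover
has a finite open refinement in which no point belongs to more than `n + 1` sets. -/
def CovDimLE (M : Type*) [TopologicalSpace M] (n : ℤ) : Prop :=
  ∀ 𝒰 : Set (Set M), 𝒰.Finite → (∀ U ∈ 𝒰, IsOpen U) → ⋃₀ 𝒰 = Set.univ →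
    ∃ 𝒱 : Set (Set M), 𝒱.Finite ∧ (∀ V ∈ 𝒱, IsOpen V) ∧ ⋃₀ 𝒱 = Set.univ ∧
      (∀ V ∈ 𝒱, ∃ U ∈ 𝒰, V ⊆ U) ∧
      ∀ x : M, ({V ∈ 𝒱 | x ∈ V}.ncard : ℤ) ≤ n + 1

/-!
Refine finite open covers of multiplicity at most `s + 1` over and over, with mesh tending to
zero, so that each cover refines the shrunken previous one. By Kőnig's lemma every point `z`
has a branch: a sequence of indices, one per level, compatible with the refinement maps, whose
closed sets all contain `z`. Points are ordered lexicographically by their branches.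

Given `x ≠ y`, fix a level `N` at which no closed set contains both. Points close enough to `x`
have level-`N` index among the at most `s + 1` sets containing `x`, and likewise for `y`. Along a
snake consecutive points thus have different level-`N` indices; since branches agreeing at
level `N` agree below it, lexicographic monotonicity forces all level-`N` indices along the snake
to be distinct. The points of even index of a snake of length `2s + 2` would then give `s + 2`
distinct sets containing `x`.
-/

open Filter Topology Function

theorem Pi.eq_of_toLex_le_of_toLex_le {ι : Type*} [LinearOrder ι] [WellFoundedLT ι]
    {β : ι → Type*} [∀ i, LinearOrder (β i)] {u v w : ∀ i, β i}
    (huv : toLex u ≤ toLex v) (hvw : toLex v ≤ toLex w) {N : ι} (huw : ∀ k ≤ N, u k = w k) :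
    ∀ k ≤ N, v k = u k := by
  intro k
  induction k using WellFoundedLT.induction with
  | _ k ih =>
    intro hk
    have hvu : ∀ j < k, v j = u j := fun j hj => ih j hj (hj.le.trans hk)
    have hwu : ∀ j < k, w j = u j := fun j hj => (huw j (hj.le.trans hk)).symm
    refine le_antisymm ?_ (Pi.apply_le_of_toLex huv fun j hj => (hvu j hj).symm)
    calc v k ≤ w k := Pi.apply_le_of_toLex hvw fun j hj => (hvu j hj).trans (hwu j hj).symm
      _ = u k := (huw k hk).symm

theorem eventually_forall_mem_imp_mem_of_isClosed {X ι : Type*} [TopologicalSpace X] [Finite ι]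
    {F : ι → Set X} (hF : ∀ i, IsClosed (F i)) (x : X) :
    ∀ᶠ a in 𝓝 x, ∀ i, a ∈ F i → x ∈ F i := by
  refine eventually_all.2 fun i => ?_
  by_cases hx : x ∈ F i
  · exact Eventually.of_forall fun _ _ => hx
  · filter_upwards [(hF i).isOpen_compl.mem_nhds hx] with a ha hai using absurd hai ha

theorem CovDimLE.exists_fin_refinement {M : Type*} [TopologicalSpace M] {n : ℤ}
    (h : CovDimLE M n) {ι : Type*} [Finite ι] (U : ι → Set M) (hUo : ∀ i, IsOpen (U i))
    (hU : ⋃ i, U i = univ) :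
    ∃ (k : ℕ) (V : Fin k → Set M), (∀ j, IsOpen (V j)) ∧ ⋃ j, V j = univ ∧
      (∀ j, ∃ i, V j ⊆ U i) ∧ ∀ x, ({j | x ∈ V j}.ncard : ℤ) ≤ n + 1 := by
  obtain ⟨𝒱, h𝒱, h𝒱o, h𝒱U, h𝒱ref, h𝒱mult⟩ :=
    h (range U) (finite_range U) (forall_mem_range.2 hUo) (by rwa [sUnion_range])
  obtain ⟨k, V, rfl⟩ := h𝒱.fin_embedding
  refine ⟨k, V, fun j => h𝒱o _ (mem_range_self j), by rwa [← sUnion_range], fun j => ?_,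
    fun x => ?_⟩
  · obtain ⟨_, ⟨i, rfl⟩, hVU⟩ := h𝒱ref _ (mem_range_self j)
    exact ⟨i, hVU⟩
  · have himage : V '' {j | x ∈ V j} = {A ∈ range V | x ∈ A} := by
      ext A
      constructor
      · rintro ⟨j, hj, rfl⟩
        exact ⟨mem_range_self j, hj⟩
      · rintro ⟨⟨j, rfl⟩, hj⟩
        exact ⟨j, hj, rfl⟩
    rw [← ncard_image_of_injective _ V.injective, himage]
    exact h𝒱mult x

/-- The open shrinking `W` of `V` is what the next stage refines; the closed sets `closure (W i)`
carry the branches. -/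
structure CoverStage (M : Type*) [MetricSpace M] (s : ℕ) (r : ℝ) where
  card : ℕ
  V : Fin card → Set M
  W : Fin card → Set M
  isOpen_W : ∀ i, IsOpen (W i)
  iUnion_W : ⋃ i, W i = univ
  closure_W_subset : ∀ i, closure (W i) ⊆ V i
  dist_lt : ∀ i, ∀ u ∈ V i, ∀ v ∈ V i, dist u v < r
  ncard_le : ∀ x, {i | x ∈ V i}.ncard ≤ s + 1

theorem CoverStage.dist_lt_of_mem_closure {M : Type*} [MetricSpace M] {s : ℕ} {r : ℝ}
    (t : CoverStage M s r) {i : Fin t.card} {x y : M}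
    (hx : x ∈ closure (t.W i)) (hy : y ∈ closure (t.W i)) : dist x y < r :=
  t.dist_lt i x (t.closure_W_subset i hx) y (t.closure_W_subset i hy)

namespace CovDimLE

variable {M : Type*} [MetricSpace M] [CompactSpace M] {s : ℕ}

theorem exists_coverStage (h : CovDimLE M s) {r : ℝ} (hr : 0 < r) {ι : Type*} [Finite ι]
    (W₀ : ι → Set M) (hW₀o : ∀ i, IsOpen (W₀ i)) (hW₀ : ⋃ i, W₀ i = univ) :
    ∃ t : CoverStage M s r, ∀ j, ∃ i, t.V j ⊆ W₀ i := by
  obtain ⟨c, -, hc, hcover⟩ :=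
    finite_cover_balls_of_compact (isCompact_univ (X := M)) (half_pos hr)
  have : Finite c := hc.to_subtype
  let U : ι × c → Set M := fun p => W₀ p.1 ∩ ball p.2 (r / 2)
  have hU : ⋃ p, U p = univ := by
    refine eq_univ_of_forall fun z => ?_
    obtain ⟨i, hi⟩ := mem_iUnion.1 (hW₀.symm ▸ mem_univ z : z ∈ ⋃ i, W₀ i)
    obtain ⟨x, hx, hzx⟩ := mem_iUnion₂.1 (hcover (mem_univ z))
    exact mem_iUnion.2 ⟨(i, ⟨x, hx⟩), hi, hzx⟩
  obtain ⟨k, V, hVo, hV, hVU, hVmult⟩ :=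
    h.exists_fin_refinement U (fun p => (hW₀o p.1).inter isOpen_ball) hU
  obtain ⟨W, hW, hWo, hWV⟩ :=
    exists_iUnion_eq_closure_subset hVo (fun _ => toFinite _) hV
  refine ⟨⟨k, V, W, hWo, hW, hWV, fun j u hu v hv => ?_, fun x => by exact_mod_cast hVmult x⟩,
    fun j => ?_⟩
  · obtain ⟨⟨i, x, _⟩, hj⟩ := hVU j
    have hu' := (hj hu).2
    have hv' := (hj hv).2
    rw [mem_ball] at hu' hv'
    linarith [dist_triangle_right u v x]
  · obtain ⟨⟨i, x⟩, hj⟩ := hVU j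
    exact ⟨i, hj.trans inter_subset_left⟩

theorem exists_seq_coverStage (h : CovDimLE M s) :
    ∃ t : ∀ n : ℕ, CoverStage M s ((1 / 2 : ℝ) ^ n),
      ∀ n j, ∃ i, (t (n + 1)).V j ⊆ (t n).W i := by
  obtain ⟨t₀, -⟩ := h.exists_coverStage (r := (1 / 2 : ℝ) ^ 0) (by positivity)
    (fun _ : Unit => univ) (fun _ => isOpen_univ) (iUnion_const _)
  choose next hnext using fun n (t : CoverStage M s ((1 / 2 : ℝ) ^ n)) =>
    h.exists_coverStage (r := (1 / 2 : ℝ) ^ (n + 1)) (by positivity) t.W t.isOpen_W t.iUnion_W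
  exact ⟨fun n => Nat.rec t₀ next n, fun n => hnext n _⟩

end CovDimLE

namespace CoverStage

variable {M : Type*} [MetricSpace M] {s : ℕ} {t : ∀ n : ℕ, CoverStage M s ((1 / 2 : ℝ) ^ n)}
  (ht : ∀ n j, ∃ i, (t (n + 1)).V j ⊆ (t n).W i)

theorem exists_level_separating_of_ne {x y : M} (hxy : x ≠ y) :
    ∃ N, ∀ i, x ∈ closure ((t N).W i) → y ∉ closure ((t N).W i) := by
  obtain ⟨N, hN⟩ := exists_pow_lt_of_lt_one (dist_pos.2 hxy) (by norm_num : (1 / 2 : ℝ) < 1)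
  exact ⟨N, fun i hx hy => (hN.trans ((t N).dist_lt_of_mem_closure hx hy)).false⟩

noncomputable def parent (n : ℕ) (j : Fin (t (n + 1)).card) : Fin (t n).card :=
  (ht n j).choose

theorem V_subset_W_parent (n : ℕ) (j : Fin (t (n + 1)).card) :
    (t (n + 1)).V j ⊆ (t n).W (parent ht n j) :=
  (ht n j).choose_spec

open CategoryTheory in
theorem exists_branch (z : M) :
    ∃ c : ∀ n, Fin (t n).card,
      (∀ n, parent ht n (c (n + 1)) = c n) ∧ ∀ n, z ∈ closure ((t n).W (c n)) := by
  let S : ℕ → Type _ := fun n => {i : Fin (t n).card // z ∈ closure ((t n).W i)}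
  have hS : ∀ n, Nonempty (S n) := fun n => by
    obtain ⟨i, hi⟩ := mem_iUnion.1 ((t n).iUnion_W.symm ▸ mem_univ z : z ∈ ⋃ i, (t n).W i)
    exact ⟨⟨i, subset_closure hi⟩⟩
  let F : ℕᵒᵖ ⥤ Type _ := Functor.ofOpSequence fun n => TypeCat.ofHom fun i : S (n + 1) =>
    (⟨parent ht n i.1, subset_closure <|
      V_subset_W_parent ht n i.1 ((t (n + 1)).closure_W_subset i.1 i.2)⟩ : S n)
  have : ∀ n : ℕᵒᵖ, Finite (F.obj n) := fun n => inferInstanceAs (Finite (S n.unop))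
  have : ∀ n : ℕᵒᵖ, Nonempty (F.obj n) := fun n => hS n.unop
  obtain ⟨u, hu⟩ := nonempty_sections_of_finite_inverse_system F
  refine ⟨fun n => (u ⟨n⟩).1, fun n => ?_, fun n => (u ⟨n⟩).2⟩
  have hstep := hu (homOfLE (Nat.le_add_right n 1)).op
  rw [Functor.ofOpSequence_map_homOfLE_succ] at hstep
  exact congrArg Subtype.val hstep

noncomputable def code (z : M) : ∀ n, Fin (t n).card := (exists_branch ht z).choose

theorem parent_code (z : M) (n : ℕ) : parent ht n (code ht z (n + 1)) = code ht z n :=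
  (exists_branch ht z).choose_spec.1 n

theorem mem_closure_code (z : M) (n : ℕ) : z ∈ closure ((t n).W (code ht z n)) :=
  (exists_branch ht z).choose_spec.2 n

theorem code_eq_of_le {a b : M} {N : ℕ} (hN : code ht a N = code ht b N) :
    ∀ k ≤ N, code ht a k = code ht b k := by
  intro k hk
  induction N, hk using Nat.le_induction with
  | base => exact hN
  | succ N _ ih => exact ih (by rw [← parent_code, hN, parent_code])

theorem code_injective : Injective (code ht) := by
  intro x y hxy
  by_contra hne
  obtain ⟨N, hN⟩ := exists_level_separating_of_ne (t := t) hne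
  exact hN _ (mem_closure_code ht x N) (congrFun hxy N ▸ mem_closure_code ht y N)

theorem eventually_mem_closure_code (x : M) (N : ℕ) :
    ∀ᶠ a in 𝓝 x, x ∈ closure ((t N).W (code ht a N)) := by
  filter_upwards [eventually_forall_mem_imp_mem_of_isClosed
    (F := fun i => closure ((t N).W i)) (fun _ => isClosed_closure) x]
    with a ha using ha _ (mem_closure_code ht a N)

def codeOrder : M → M → Prop := (· < ·) on fun z => toLex (code ht z)

theorem isStrictTotalOrder_codeOrder : IsStrictTotalOrder M (codeOrder ht) :=
  (toLex.injective.comp (code_injective ht)).isStrictTotalOrder_onFun _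

theorem injective_code_apply_of_strictMono {m : ℕ} {a : Fin (m + 1) → M}
    (ha : StrictMono fun i => toLex (code ht (a i))) {N : ℕ}
    (hsucc : ∀ i : Fin m, code ht (a i.castSucc) N ≠ code ht (a i.succ) N) :
    Injective fun i => code ht (a i) N := by
  refine .of_lt_imp_ne fun i j hij heq => ?_
  let p : Fin m := ⟨i, by omega⟩
  have hpj : p.succ ≤ j := Fin.mk_le_of_le_val (by simp; omega)
  have hp : code ht (a p.succ) N = code ht (a i) N :=
    Pi.eq_of_toLex_le_of_toLex_le (ha Fin.castSucc_lt_succ).le (ha.monotone hpj)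
      (code_eq_of_le ht heq) N le_rfl
  exact hsucc p hp.symm

theorem le_of_forall_hasSnake {x y : M} (hxy : x ≠ y) {m : ℕ}
    (hsnake : ∀ ε : ℝ, 0 < ε → HasSnake (codeOrder ht) (ball x ε) (ball y ε) m) :
    m ≤ 2 * s + 1 := by
  obtain ⟨N, hN⟩ := exists_level_separating_of_ne (t := t) hxy
  obtain ⟨εx, hεx, hx⟩ := Metric.eventually_nhds_iff_ball.1 (eventually_mem_closure_code ht x N)
  obtain ⟨εy, hεy, hy⟩ := Metric.eventually_nhds_iff_ball.1 (eventually_mem_closure_code ht y N)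
  obtain ⟨a, ha, heven, hodd⟩ := hsnake (min εx εy) (lt_min hεx hεy)
  have hxa : ∀ i : Fin (m + 1), Even (i : ℕ) → x ∈ closure ((t N).W (code ht (a i) N)) :=
    fun i hi => hx _ (ball_subset_ball (min_le_left _ _) (heven i hi))
  have hya : ∀ i : Fin (m + 1), Odd (i : ℕ) → y ∈ closure ((t N).W (code ht (a i) N)) :=
    fun i hi => hy _ (ball_subset_ball (min_le_right _ _) (hodd i hi))
  have hinj := injective_code_apply_of_strictMono ht (fun i j hij => ha i j hij) (N := N)
    fun i heq => by
      rcases Nat.even_or_odd (i : ℕ) with hi | hi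
      · exact hN _ (hxa _ hi) (heq ▸ hya i.succ (by simpa [Nat.odd_add_one] using hi))
      · exact hN _ (heq ▸ hxa i.succ (by simpa [Nat.even_add_one] using hi)) (hya _ hi)
  by_contra! hm
  let e : Fin (s + 2) → Fin (m + 1) := fun p => ⟨2 * p, by omega⟩
  have he : Injective e := fun p q hpq => by
    simpa [e, Fin.ext_iff] using hpq
  have hsub : range ((fun i => code ht (a i) N) ∘ e) ⊆ {i | x ∈ (t N).V i} := by
    rintro _ ⟨p, rfl⟩
    exact (t N).closure_W_subset _ (hxa _ (even_two_mul _))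
  have hcard := ncard_le_ncard hsub (toFinite _)
  rw [ncard_range_of_injective (hinj.comp he), Nat.card_eq_fintype_card, Fintype.card_fin]
    at hcard
  have := (t N).ncard_le x
  omega

end CoverStage

/-- **Theorem B.** If `M` is a compact metric space with covering dimension at most `s`,
then there exists a total order `T` on `M` with `Snake(M,T) ≤ 2s + 1`. -/
theorem exists_order_snake_le_of_covDim_le
    {M : Type*} [MetricSpace M] [CompactSpace M]
    (s : ℕ) (h : CovDimLE M (s : ℤ)) :
    ∃ T : M → M → Prop, IsStrictTotalOrder M T ∧
      snakeNumSpace T ≤ ((2 * s + 1 : ℕ) : ℕ∞) := by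
  obtain ⟨t, ht⟩ := h.exists_seq_coverStage
  refine ⟨CoverStage.codeOrder ht, CoverStage.isStrictTotalOrder_codeOrder ht, ?_⟩
  refine iSup₂_le fun x y => iSup_le fun hxy => iSup₂_le fun m hm => ?_
  exact_mod_cast CoverStage.le_of_forall_hasSnake ht hxy hm
end

section
/- Let S¹ be the circle obtained from [0,1] by identifying 0 and 1 (equivalently, the unit circle with its intrinsic or Euclidean metric), and let T be the order induced from the natural order of (0,1) with the identified point 0 = 1 declared T-smallest. Then for distinct points x,y ∈ (0,1) one has Snake_T(x,y) = 1, while Snake_T(0,x) = 2 for every x ∈ (0,1); consequently Snake(S¹,T) = 2. -/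
/-!
Inside `(0,1)` the order is that of `ℝ` and small balls are intervals, so between balls around
`x < y` a `T`-increasing sequence can only pass once, from the ball of `x` to the ball of `y`.
A small ball around the glued point `0` consists of an initial segment of the order together
with a final segment. Hence `0 < x < 1 - δ` is a snake of length `2` for `(0, x)`, while no
increasing sequence visits the ball of `0` between two visits to the ball of `x`.
-/

open Metric Set

/-- The representative in `[0,1)` of a point of the circle `ℝ/ℤ = [0,1]/(0∼1)`. -/
noncomputable def circleRep (z : AddCircle (1 : ℝ)) : ℝ :=
  haveI : Fact ((0 : ℝ) < 1) := ⟨one_pos⟩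
  (AddCircle.equivIco 1 0 z : ℝ)

/-- The order on the circle induced from the natural order of `[0,1)`, so that the
identified point `0 = 1` is the smallest element. -/
noncomputable def circleOrder (z w : AddCircle (1 : ℝ)) : Prop :=
  circleRep z < circleRep w

section Snake

variable {M : Type*} {T : M → M → Prop} {U V : Set M}

theorem HasSnake.of_le {s k : ℕ} (h : HasSnake T U V s) (hk : k ≤ s) : HasSnake T U V k := by
  obtain ⟨a, hT, hU, hV⟩ := h
  exact ⟨a ∘ Fin.castLE (by omega), fun i j hij => hT _ _ hij, fun i hi => hU _ hi,
    fun i hi => hV _ hi⟩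

theorem HasSnake.tail {s : ℕ} (h : HasSnake T U V (s + 1)) : HasSnake T V U s := by
  obtain ⟨a, hT, hU, hV⟩ := h
  refine ⟨a ∘ Fin.succ, fun i j hij => hT _ _ (Fin.succ_lt_succ_iff.2 hij),
    fun i hi => hV _ ?_, fun i hi => hU _ ?_⟩
  · simpa using hi.add_one
  · simpa using hi.add_one

theorem hasSnake_zero_iff : HasSnake T U V 0 ↔ U.Nonempty := by
  refine ⟨fun ⟨a, _, hU, _⟩ => ⟨a 0, hU 0 Even.zero⟩, fun ⟨u, hu⟩ => ⟨fun _ => u, ?_, ?_, ?_⟩⟩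
  all_goals simp [hu]

theorem hasSnake_one_iff : HasSnake T U V 1 ↔ ∃ u ∈ U, ∃ v ∈ V, T u v := by
  constructor
  · rintro ⟨a, hT, hU, hV⟩
    exact ⟨a 0, hU 0 Even.zero, a 1, hV 1 odd_one, hT 0 1 Fin.zero_lt_one⟩
  · rintro ⟨u, hu, v, hv, huv⟩
    refine ⟨![u, v], ?_, ?_, ?_⟩ <;> simp [Fin.forall_fin_two, hu, hv, huv]

theorem hasSnake_two_iff :
    HasSnake T U V 2 ↔ ∃ u ∈ U, ∃ v ∈ V, ∃ w ∈ U, T u v ∧ T v w ∧ T u w := by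
  constructor
  · rintro ⟨a, hT, hU, hV⟩
    exact ⟨a 0, hU 0 Even.zero, a 1, hV 1 odd_one, a 2, hU 2 even_two,
      hT 0 1 (by decide), hT 1 2 (by decide), hT 0 2 (by decide)⟩
  · rintro ⟨u, hu, v, hv, w, hw, huv, hvw, huw⟩
    refine ⟨![u, v, w], ?_, ?_, ?_⟩ <;> simp [Fin.forall_fin_succ, hu, hv, hw, huv, hvw, huw]

end Snake

section SnakeNum

variable {M : Type*} [MetricSpace M] {T : M → M → Prop}

theorem snakeNum_eq {x y : M} {n : ℕ} (hsnake : ∀ ε > 0, HasSnake T (ball x ε) (ball y ε) n)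
    (hno : ∃ ε > 0, ¬HasSnake T (ball x ε) (ball y ε) (n + 1)) : snakeNum T x y = n := by
  obtain ⟨ε, hε, hno⟩ := hno
  refine le_antisymm (iSup₂_le fun s hs => ?_) (le_iSup₂_of_le n hsnake le_rfl)
  exact Nat.cast_le.2 (not_lt.1 fun hlt => hno ((hs ε hε).of_le hlt))

theorem le_snakeNumSpace {x y : M} (hxy : x ≠ y) : snakeNum T x y ≤ snakeNumSpace T :=
  le_iSup₂_of_le x y (le_iSup_of_le hxy le_rfl)

theorem snakeNumSpace_le {n : ℕ∞} (h : ∀ x y : M, x ≠ y → snakeNum T x y ≤ n) :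
    snakeNumSpace T ≤ n :=
  iSup₂_le fun x y => iSup_le (h x y)

end SnakeNum

section CircleOrder

local instance : Fact ((0 : ℝ) < 1) := ⟨one_pos⟩

theorem circleRep_coe (x : ℝ) : circleRep x = Int.fract x := by
  simp [circleRep, AddCircle.coe_equivIco_mk_apply]

theorem circleRep_mem (z : AddCircle (1 : ℝ)) : circleRep z ∈ Ico (0 : ℝ) 1 := by
  simpa [circleRep] using (AddCircle.equivIco 1 0 z).2

theorem coe_circleRep (z : AddCircle (1 : ℝ)) : (circleRep z : AddCircle (1 : ℝ)) = z :=
  (AddCircle.equivIco 1 0).left_inv z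

theorem circleRep_injective : Function.Injective circleRep :=
  Function.LeftInverse.injective coe_circleRep

theorem circleRep_zero : circleRep 0 = 0 := by
  simpa using circleRep_coe 0

theorem circleRep_pos {z : AddCircle (1 : ℝ)} (hz : z ≠ 0) : 0 < circleRep z :=
  (circleRep_mem z).1.lt_of_ne fun h => hz (circleRep_injective (h.symm.trans circleRep_zero.symm))

theorem coe_half_ne_zero : ((1 / 2 : ℝ) : AddCircle (1 : ℝ)) ≠ 0 := fun h => by
  have := congrArg circleRep h
  rw [circleRep_coe, circleRep_zero, Int.fract_eq_self.2 ⟨by norm_num, by norm_num⟩] at this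
  norm_num at this

theorem circleOrder_zero_left {z : AddCircle (1 : ℝ)} (hz : z ≠ 0) : circleOrder 0 z := by
  simpa [circleOrder, circleRep_zero] using circleRep_pos hz

theorem abs_sub_circleRep_lt_or_gt {z w : AddCircle (1 : ℝ)} {ε : ℝ} (h : dist z w < ε) :
    |circleRep z - circleRep w| < ε ∨ 1 - ε < |circleRep z - circleRep w| := by
  obtain ⟨hz0, hz1⟩ := circleRep_mem z
  obtain ⟨hw0, hw1⟩ := circleRep_mem w
  set d := circleRep z - circleRep w
  have hd : |d - round d| < ε := by
    rwa [← UnitAddCircle.norm_eq, AddCircle.coe_sub, coe_circleRep, coe_circleRep, ← dist_eq_norm]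
  have hr := abs_le.1 (abs_sub_round d)
  have hround : round d = -1 ∨ round d = 0 ∨ round d = 1 := by
    have h₁ : ((round d : ℤ) : ℝ) < 2 := by linarith
    have h₂ : (-2 : ℝ) < ((round d : ℤ) : ℝ) := by linarith
    have : round d < 2 := by exact_mod_cast h₁
    have : -2 < round d := by exact_mod_cast h₂
    omega
  rcases hround with h | h | h <;> rw [h] at hd hr <;> push_cast at hd hr
  · right; rw [abs_lt] at hd; rw [abs_of_neg (by linarith)]; linarith
  · left; simpa using hd
  · right; rw [abs_lt] at hd; rw [abs_of_pos (by linarith)]; linarith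

theorem abs_sub_circleRep_lt {z w : AddCircle (1 : ℝ)} {ε : ℝ} (h : dist z w < ε)
    (hε₀ : ε ≤ circleRep w) (hε₁ : ε ≤ 1 - circleRep w) : |circleRep z - circleRep w| < ε := by
  obtain ⟨hz0, hz1⟩ := circleRep_mem z
  refine (abs_sub_circleRep_lt_or_gt h).resolve_right fun hfar => ?_
  rcases lt_abs.1 hfar with hfar | hfar <;> linarith

theorem circleRep_lt_or_gt_of_dist_zero_lt {z : AddCircle (1 : ℝ)} {ε : ℝ} (h : dist z 0 < ε) :
    circleRep z < ε ∨ 1 - ε < circleRep z := by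
  simpa [circleRep_zero, abs_of_nonneg (circleRep_mem z).1] using abs_sub_circleRep_lt_or_gt h

theorem exists_mem_ball_zero_circleOrder (x : AddCircle (1 : ℝ)) {ε : ℝ} (hε : 0 < ε) :
    ∃ z ∈ ball (0 : AddCircle (1 : ℝ)) ε, circleOrder x z := by
  obtain ⟨hx0, hx1⟩ := circleRep_mem x
  set δ := min (ε / 2) ((1 - circleRep x) / 2)
  have hδ₀ : 0 < δ := lt_min (by linarith) (by linarith)
  have hδε : δ < ε := (min_le_left _ _).trans_lt (by linarith)
  have hδx : δ ≤ (1 - circleRep x) / 2 := min_le_right _ _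
  -- `-δ` is the point `1 - δ`, which lies at the top of the order while being close to `0`.
  refine ⟨((-δ : ℝ) : AddCircle (1 : ℝ)), ?_, ?_⟩
  · rw [mem_ball, dist_zero_right, AddCircle.coe_neg, norm_neg]
    have hδ_half : |δ| ≤ |(1 : ℝ)| / 2 := by rw [abs_of_pos hδ₀, abs_one]; linarith
    rwa [(AddCircle.norm_coe_eq_abs_iff _ one_ne_zero).2 hδ_half, abs_of_pos hδ₀]
  · show circleRep x < circleRep _
    have hfract : Int.fract δ = δ := Int.fract_eq_self.2 ⟨hδ₀.le, by linarith⟩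
    rw [circleRep_coe, Int.fract_neg (hfract.symm ▸ hδ₀.ne'), hfract]
    linarith

end CircleOrder

section CircleSnake

variable {x y : AddCircle (1 : ℝ)}

theorem not_hasSnake_one_ball_of_circleOrder (hx : x ≠ 0) (hxy : circleOrder x y) :
    ∃ ε > 0, ¬HasSnake circleOrder (ball y ε) (ball x ε) 1 := by
  have hx₀ := circleRep_pos hx
  have hy₁ := (circleRep_mem y).2
  have hxy' : circleRep x < circleRep y := hxy
  set ε := min (circleRep x) (min (1 - circleRep y) ((circleRep y - circleRep x) / 2))
  have hεx : ε ≤ circleRep x := min_le_left _ _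
  have hεy : ε ≤ 1 - circleRep y := (min_le_right _ _).trans (min_le_left _ _)
  have hεgap : ε ≤ (circleRep y - circleRep x) / 2 := (min_le_right _ _).trans (min_le_right _ _)
  refine ⟨ε, lt_min hx₀ (lt_min (by linarith) (by linarith)), ?_⟩
  rw [hasSnake_one_iff]
  rintro ⟨u, hu, v, hv, huv⟩
  have hu' := abs_lt.1 (abs_sub_circleRep_lt hu (by linarith) hεy)
  have hv' := abs_lt.1 (abs_sub_circleRep_lt hv hεx (by linarith))
  have huv' : circleRep u < circleRep v := huv
  linarith

theorem not_hasSnake_two_ball_zero (hx : x ≠ 0) :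
    ∃ ε > 0, ¬HasSnake circleOrder (ball x ε) (ball 0 ε) 2 := by
  have hx₀ := circleRep_pos hx
  have hx₁ := (circleRep_mem x).2
  set ε := min (circleRep x / 2) ((1 - circleRep x) / 2)
  have hε₀ : ε ≤ circleRep x / 2 := min_le_left _ _
  have hε₁ : ε ≤ (1 - circleRep x) / 2 := min_le_right _ _
  refine ⟨ε, lt_min (by linarith) (by linarith), ?_⟩
  rw [hasSnake_two_iff]
  rintro ⟨u, hu, v, hv, w, hw, huv, hvw, -⟩
  have hu' := abs_lt.1 (abs_sub_circleRep_lt hu (by linarith) (by linarith))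
  have hw' := abs_lt.1 (abs_sub_circleRep_lt hw (by linarith) (by linarith))
  have huv' : circleRep u < circleRep v := huv
  have hvw' : circleRep v < circleRep w := hvw
  rcases circleRep_lt_or_gt_of_dist_zero_lt hv with hv' | hv' <;> linarith

theorem snakeNum_circleOrder_eq_one (hx : x ≠ 0) (hxy : circleOrder x y) :
    snakeNum circleOrder x y = 1 := by
  obtain ⟨ε, hε, hno⟩ := not_hasSnake_one_ball_of_circleOrder hx hxy
  exact snakeNum_eq (fun ε hε => hasSnake_one_iff.2 ⟨x, mem_ball_self hε, y, mem_ball_self hε, hxy⟩)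
    ⟨ε, hε, fun h => hno h.tail⟩

theorem snakeNum_circleOrder_eq_zero (hx : x ≠ 0) (hxy : circleOrder x y) :
    snakeNum circleOrder y x = 0 :=
  snakeNum_eq (fun _ hε => hasSnake_zero_iff.2 ⟨y, mem_ball_self hε⟩)
    (not_hasSnake_one_ball_of_circleOrder hx hxy)

theorem snakeNum_circleOrder_zero_left (hx : x ≠ 0) : snakeNum circleOrder 0 x = 2 := by
  obtain ⟨ε, hε, hno⟩ := not_hasSnake_two_ball_zero hx
  refine snakeNum_eq (fun ε hε => ?_) ⟨ε, hε, fun h => hno h.tail⟩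
  obtain ⟨z, hz, hxz⟩ := exists_mem_ball_zero_circleOrder x hε
  have h0x := circleOrder_zero_left hx
  exact hasSnake_two_iff.2 ⟨0, mem_ball_self hε, x, mem_ball_self hε, z, hz, h0x, hxz,
    lt_trans h0x hxz⟩

theorem snakeNum_circleOrder_zero_right (hx : x ≠ 0) : snakeNum circleOrder x 0 = 1 := by
  refine snakeNum_eq (fun ε hε => ?_) (not_hasSnake_two_ball_zero hx)
  obtain ⟨z, hz, hxz⟩ := exists_mem_ball_zero_circleOrder x hε
  exact hasSnake_one_iff.2 ⟨x, mem_ball_self hε, z, hz, hxz⟩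

end CircleSnake

/-- **Example 2.** On the circle obtained from `[0,1]` by identifying `0` and `1`,
with the order induced from `(0,1)` and the identified point declared smallest:
distinct points of `(0,1)` have snake number `1`, the pair `(0, x)` has snake
number `2`, and consequently `Snake(S¹, T) = 2`. -/
theorem snake_circle_glued_order :
    (∀ x y : AddCircle (1 : ℝ), x ≠ 0 → y ≠ 0 → x ≠ y →
      max (snakeNum circleOrder x y) (snakeNum circleOrder y x) = 1) ∧
    (∀ x : AddCircle (1 : ℝ), x ≠ 0 →
      max (snakeNum circleOrder 0 x) (snakeNum circleOrder x 0) = 2) ∧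
    snakeNumSpace circleOrder = 2 := by
  have pair : ∀ x y : AddCircle (1 : ℝ), x ≠ 0 → y ≠ 0 → x ≠ y →
      max (snakeNum circleOrder x y) (snakeNum circleOrder y x) = 1 := by
    intro x y hx hy hxy
    rcases (circleRep_injective.ne hxy).lt_or_gt with h | h
    · rw [snakeNum_circleOrder_eq_one hx h, snakeNum_circleOrder_eq_zero hx h]
      exact max_eq_left zero_le_one
    · rw [snakeNum_circleOrder_eq_zero hy h, snakeNum_circleOrder_eq_one hy h]
      exact max_eq_right zero_le_one
  have withZero : ∀ x : AddCircle (1 : ℝ), x ≠ 0 →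
      max (snakeNum circleOrder 0 x) (snakeNum circleOrder x 0) = 2 := fun x hx => by
    rw [snakeNum_circleOrder_zero_left hx, snakeNum_circleOrder_zero_right hx]
    exact max_eq_left one_le_two
  refine ⟨pair, withZero, le_antisymm (snakeNumSpace_le fun x y hxy => ?_) ?_⟩
  · by_cases hx : x = 0
    · subst hx; exact (withZero y hxy.symm).le.trans' (le_max_left _ _)
    by_cases hy : y = 0
    · subst hy; exact (withZero x hx).le.trans' (le_max_right _ _)
    exact (le_max_left _ _).trans ((pair x y hx hy hxy).trans_le one_le_two)
  · exact (snakeNum_circleOrder_zero_left coe_half_ne_zero).ge.trans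
      (le_snakeNumSpace coe_half_ne_zero.symm)
end

section
/- Let (M,T) be an ordered compact metric space with Snake(M,T) < ∞, let x₀ ∈ M and r > 0. Then there exists a finite family of T-convex subsets X₁, …, X_m of M such that their union covers M ∖ B_r(x₀) and does not intersect some open ball B_ε(x₀) around x₀ (for some ε > 0). -/
open Metric Set

/-- A subset `X` of an ordered space is `T`-convex if whenever `x <_T y <_T z`
and `x, z ∈ X`, also `y ∈ X`. -/
def TConvex {M : Type*} (T : M → M → Prop) (X : Set M) : Prop :=
  ∀ x y z : M, T x y → T y z → x ∈ X → z ∈ X → y ∈ X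

/-! Realize `T` as a linear order. For `y ≠ x₀`, finiteness of `Snake_T(y, x₀)` yields a radius
`δ` such that `B_δ(y)` and `B_δ(x₀)` are disjoint and carry no snake of some length `s`. Then
`B_δ(y)` meets only finitely many order-connected components of `M ∖ B_δ(x₀)`: consecutive ones,
in increasing order, are separated by points of `B_δ(x₀)`, so `s + 1` of them would interleave
into a snake of length `2 s`. Finitely many such balls cover the compact set `M ∖ B_r(x₀)`, and
the components they meet are `T`-convex, cover it, and each avoids a ball around `x₀`. -/

open Filter Topology

namespace HasSnake

variable {M : Type*} {T : M → M → Prop} {U₁ U₂ : Set M} {s : ℕ}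

theorem mono {V₁ V₂ : Set M} (h : HasSnake T U₁ U₂ s) (h₁ : U₁ ⊆ V₁) (h₂ : U₂ ⊆ V₂) :
    HasSnake T V₁ V₂ s :=
  let ⟨a, ha, ha₁, ha₂⟩ := h
  ⟨a, ha, fun i hi => h₁ (ha₁ i hi), fun i hi => h₂ (ha₂ i hi)⟩

theorem of_le_s8 {l : ℕ} (h : HasSnake T U₁ U₂ s) (hl : l ≤ s) : HasSnake T U₁ U₂ l := by
  obtain ⟨a, ha, ha₁, ha₂⟩ := h
  exact ⟨fun i => a (Fin.castLE (by omega) i), fun i j hij => ha _ _ hij,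
    fun i hi => ha₁ _ hi, fun i hi => ha₂ _ hi⟩

end HasSnake

section LinearOrder

variable {α : Type*} [LinearOrder α]

theorem Set.OrdConnected.tConvex {X : Set α} (h : X.OrdConnected) : TConvex (· < ·) X :=
  fun _ _ _ hxy hyz hx hz => h.out hx hz ⟨hxy.le, hyz.le⟩

theorem hasSnake_two_mul_of_inter_Ioo_nonempty {U B : Set α} {k : ℕ} (u : ℕ → α)
    (hu : ∀ i ≤ k, u i ∈ U) (hgap : ∀ i < k, (B ∩ Ioo (u i) (u (i + 1))).Nonempty) :
    HasSnake (· < ·) U B (2 * k) := by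
  have : Nonempty α := ⟨u 0⟩
  choose! b hb using hgap
  let a : ℕ → α := fun n => if Even n then u (n / 2) else b (n / 2)
  have ha_succ : ∀ n < 2 * k, a n < a (n + 1) := by
    intro n hn
    rcases Nat.even_or_odd n with hev | hodd
    · have hn' : (n + 1) / 2 = n / 2 := by rcases hev with ⟨m, rfl⟩; omega
      simpa [a, hev, Nat.even_add_one, hn'] using (hb (n / 2) (by omega)).2.1
    · have hn' : (n + 1) / 2 = n / 2 + 1 := by rcases hodd with ⟨m, rfl⟩; omega
      simpa [a, Nat.not_even_iff_odd.2 hodd, Nat.even_add_one, hn'] using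
        (hb (n / 2) (by omega)).2.2
  refine ⟨fun i => a i, Fin.strictMono_iff_lt_succ.2 fun i => ha_succ i i.isLt, ?_, ?_⟩
  · intro i hi
    simpa [a, hi] using hu (i / 2) (by omega)
  · intro i hi
    simpa [a, Nat.not_even_iff_odd.2 hi] using (hb (i / 2) (by rcases hi with ⟨m, hm⟩; omega)).1

theorem inter_Ioo_nonempty_of_ordConnectedComponent_ne {B : Set α} {u v : α} (huv : u ≤ v)
    (hu : u ∉ B) (hv : v ∉ B) (h : ordConnectedComponent Bᶜ u ≠ ordConnectedComponent Bᶜ v) :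
    (B ∩ Ioo u v).Nonempty := by
  by_contra hempty
  refine h (ordConnectedComponent_eq ?_)
  rintro w hw hwB
  rw [uIcc_of_le huv] at hw
  rcases hw.1.eq_or_lt with rfl | huw
  · exact hu hwB
  rcases hw.2.eq_or_lt with rfl | hwv
  · exact hv hwB
  exact hempty ⟨w, hwB, huw, hwv⟩

open Fin.NatCast in
theorem finite_ordConnectedComponent_image_of_not_hasSnake {U B : Set α} {s : ℕ}
    (hUB : Disjoint U B) (h : ¬ HasSnake (· < ·) U B s) :
    (ordConnectedComponent Bᶜ '' U).Finite := by
  by_contra hinf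
  obtain ⟨t, htU, hbij⟩ := exists_subset_bijOn U (ordConnectedComponent Bᶜ)
  rw [← hbij.image_eq] at hinf
  obtain ⟨F, hFt, hcard⟩ := (Infinite.of_image _ hinf).exists_subset_card_eq (s + 1)
  -- the cast to `Fin (s + 1)` wraps around past `s`, but only `u 0, …, u s` are used
  let u : ℕ → α := fun n => F.orderEmbOfFin hcard (n : Fin (s + 1))
  have hut : ∀ n, u n ∈ t := fun n => hFt (F.orderEmbOfFin_mem hcard _)
  have huB : ∀ n, u n ∉ B := fun n => hUB.notMem_of_mem_left (htU (hut n))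
  refine h ((hasSnake_two_mul_of_inter_Ioo_nonempty (k := s) u (fun i _ => htU (hut i))
    fun i hi => ?_).of_le_s8 (by omega))
  have hlt : u i < u (i + 1) :=
    (F.orderEmbOfFin hcard).strictMono (Fin.natCast_strictMono hi (lt_add_one i))
  exact inter_Ioo_nonempty_of_ordConnectedComponent_ne hlt.le (huB _) (huB _)
    fun heq => hlt.ne (hbij.injOn (hut _) (hut _) heq)

end LinearOrder

section Metric

variable {M : Type*} [MetricSpace M]

theorem snakeNum_le_snakeNumSpace (T : M → M → Prop) {x y : M} (hxy : x ≠ y) :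
    snakeNum T x y ≤ snakeNumSpace T :=
  le_iSup₂_of_le x y (le_iSup_of_le hxy le_rfl)

theorem exists_not_hasSnake_of_snakeNum_lt_top {T : M → M → Prop} {x y : M}
    (h : snakeNum T x y < ⊤) : ∃ s, ∃ ε > 0, ¬ HasSnake T (ball x ε) (ball y ε) s := by
  by_contra! hall
  exact h.ne (ENat.eq_top_iff_forall_ge.2 fun s => le_biSup (fun s : ℕ => (s : ℕ∞)) (hall s))

theorem exists_ball_finite_ordConnectedComponent_image [LinearOrder M] {x y : M} (hxy : x ≠ y)
    (h : snakeNum (· < ·) y x < ⊤) :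
    ∃ δ > 0, Disjoint (ball y δ) (ball x δ) ∧
      (ordConnectedComponent (ball x δ)ᶜ '' ball y δ).Finite := by
  obtain ⟨s, ε, hε, hs⟩ := exists_not_hasSnake_of_snakeNum_lt_top h
  set δ := min ε (dist y x / 2)
  have hδε : δ ≤ ε := min_le_left _ _
  have hdisj : Disjoint (ball y δ) (ball x δ) :=
    ball_disjoint_ball (by linarith [min_le_right ε (dist y x / 2)])
  refine ⟨δ, lt_min hε (half_pos (dist_pos.2 hxy.symm)), hdisj, ?_⟩
  exact finite_ordConnectedComponent_image_of_not_hasSnake hdisj fun hδs =>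
    hs (hδs.mono (ball_subset_ball hδε) (ball_subset_ball hδε))

theorem IsCompact.exists_finite_ordConnected_cover [LinearOrder M] {K : Set M} (hK : IsCompact K)
    {x : M} (hx : x ∉ K) (h : ∀ y ∈ K, snakeNum (· < ·) y x < ⊤) :
    ∃ 𝒮 : Set (Set M), 𝒮.Finite ∧ (∀ C ∈ 𝒮, C.OrdConnected) ∧ K ⊆ ⋃₀ 𝒮 ∧ (⋃₀ 𝒮)ᶜ ∈ 𝓝 x := by
  have hloc : ∀ y ∈ K, ∃ δ > 0, Disjoint (ball y δ) (ball x δ) ∧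
      (ordConnectedComponent (ball x δ)ᶜ '' ball y δ).Finite := fun y hy =>
    exists_ball_finite_ordConnectedComponent_image (ne_of_mem_of_not_mem hy hx).symm (h y hy)
  choose! δ hδ hdisj hfin using hloc
  obtain ⟨t, htK, hKt⟩ :=
    hK.elim_nhds_subcover (fun y => ball y (δ y)) fun y hy => ball_mem_nhds y (hδ y hy)
  refine ⟨⋃ y ∈ t, ordConnectedComponent (ball x (δ y))ᶜ '' ball y (δ y),
    t.finite_toSet.biUnion fun y hy => hfin y (htK y hy), ?_, ?_, ?_⟩
  · simp only [mem_iUnion, mem_image]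
    rintro _ ⟨y, -, u, -, rfl⟩
    infer_instance
  · intro z hz
    obtain ⟨y, hyt, hzy⟩ := mem_iUnion₂.1 (hKt hz)
    refine mem_sUnion.2 ⟨_, mem_iUnion₂.2 ⟨y, hyt, mem_image_of_mem _ hzy⟩, ?_⟩
    exact self_mem_ordConnectedComponent.2 ((hdisj y (htK y hyt)).notMem_of_mem_left hzy)
  · have hball : ⋂ y ∈ t, ball x (δ y) ∈ 𝓝 x :=
      (biInter_finset_mem t).2 fun y hy => ball_mem_nhds x (hδ y (htK y hy))
    refine mem_of_superset hball fun w hw ⟨C, hC, hwC⟩ => ?_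
    obtain ⟨y, hyt, u, -, rfl⟩ := by simpa only [mem_iUnion, mem_image, exists_prop] using hC
    exact ordConnectedComponent_subset hwC (mem_iInter₂.1 hw y hyt)

end Metric

/-- **Lemma 2.** If `(M, T)` is an ordered compact metric space with `Snake(M,T) < ∞`,
`x₀ ∈ M` and `r > 0`, then there is a finite family of `T`-convex sets whose union
covers `M ∖ B_r(x₀)` and avoids some ball `B_ε(x₀)`. -/
theorem exists_finite_TConvex_family
    {M : Type*} [MetricSpace M] [CompactSpace M]
    (T : M → M → Prop) (hT : IsStrictTotalOrder M T)
    (hfin : snakeNumSpace T < ⊤) (x₀ : M) (r : ℝ) (hr : 0 < r) :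
    ∃ (m : ℕ) (X : Fin m → Set M) (ε : ℝ), 0 < ε ∧
      (∀ i, TConvex T (X i)) ∧
      Set.univ \ Metric.ball x₀ r ⊆ ⋃ i, X i ∧
      (⋃ i, X i) ∩ Metric.ball x₀ ε = ∅ := by
  classical
  let : LinearOrder M := @linearOrderOfSTO M T hT _
  have hx₀ : x₀ ∉ univ \ ball x₀ r := fun h => h.2 (mem_ball_self hr)
  obtain ⟨𝒮, h𝒮, hconv, hcover, hnhds⟩ :=
    (isClosed_univ.sdiff isOpen_ball).isCompact.exists_finite_ordConnected_cover hx₀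
      fun y hy => (snakeNum_le_snakeNumSpace T (ne_of_mem_of_not_mem hy hx₀)).trans_lt hfin
  obtain ⟨ε, hε, hball⟩ := Metric.mem_nhds_iff.1 hnhds
  obtain ⟨m, X, rfl⟩ := h𝒮.fin_embedding
  rw [sUnion_range] at hcover hball
  exact ⟨m, X, ε, hε, fun i => (hconv _ (mem_range_self i)).tConvex, hcover,
    disjoint_iff_inter_eq_empty.1 (subset_compl_iff_disjoint_left.1 hball)⟩
end

section
/- Let M be a separable metric space with Lebesgue covering dimension dim M ≤ n. Then there exists a total order T on M for which Snake(M,T) ≤ 2n + 1. (This extends Theorem B from compact to separable metric spaces via the compactification theorem.) -/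
/-!
Build a tower of finite closed covers `F l` of `M`, each refining the previous one through a
parent map, with no point in more than `n + 1` sets of a level (this is where `dim M ≤ n` enters).
Level `l + 1` also refines one of countably many two-set covers `{B(q, 2r), M ∖ B̄(q, r)}`, with
`q` from a dense sequence and `r = 1/(k+1)`, so any two distinct points eventually lie in no
common set of a level.  By Kőnig's lemma every point `x` has a thread `c x`, a branch of the tower
through sets containing `x`, and `M` is ordered by the lexicographic order of threads.  Near `x`
only the at most `n + 1` sets of level `m` containing `x` can contain points, so a snake between
`x` and `y` reads, at a level `m` separating them, a word in at most `2n + 2` letters.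
Consecutive letters differ, and since a thread is determined below `m` by its value at `m`,
lexicographic monotonicity forbids a letter from reappearing; hence the snake has at most
`2n + 2` points.
-/

open Metric Set

open Function Filter Topology

theorem Pi.eqOn_Iic_of_toLex_le_of_le {ι β : Type*} [LinearOrder ι] [PartialOrder β]
    {x y z : ι → β} {m : ι} (hxy : toLex x ≤ toLex y) (hyz : toLex y ≤ toLex z)
    (hxz : EqOn x z (Iic m)) : EqOn x y (Iic m) := by
  rcases hxy.lt_or_eq with ⟨i, hxy_eq, hxy_lt⟩ | hxy
  · refine fun l hl => hxy_eq l (lt_of_le_of_lt hl (not_le.1 fun him => hyz.not_gt ?_))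
    exact ⟨i, fun j hj => (hxz (hj.le.trans him)).symm.trans (hxy_eq j hj),
      show z i < y i from hxz him ▸ hxy_lt⟩
  · exact fun l _ => congrFun (toLex.injective hxy) l

theorem injective_apply_of_strictMono_toLex {ι β : Type*} [LinearOrder ι] [PartialOrder β]
    {s : ℕ} {m : ι} {w : Fin (s + 1) → ι → β} (hw : StrictMono fun i => toLex (w i))
    (hpre : ∀ i j, w i m = w j m → EqOn (w i) (w j) (Iic m))
    (hsucc : ∀ k : Fin s, w k.castSucc m ≠ w k.succ m) :
    Injective fun i => w i m := by
  intro i j hij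
  by_contra hne
  wlog hlt : i < j generalizing i j
  · exact this hij.symm (Ne.symm hne) (lt_of_le_of_ne (not_lt.1 hlt) (Ne.symm hne))
  let k : Fin s := ⟨i, by omega⟩
  have hk : k.castSucc = i := rfl
  have hkj : k.succ ≤ j := Fin.le_iff_val_le_val.2 (by simp [k]; omega)
  -- `w (i + 1)` lies lexicographically between `w i` and `w j`, which agree on `Iic m`
  have := Pi.eqOn_Iic_of_toLex_le_of_le (hw (hk ▸ k.castSucc_lt_succ)).le (hw.monotone hkj)
    (hpre i j hij)
  exact hsucc k (this (le_refl m))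

def IsThread {α : Type*} (par : ℕ → α → α) (t : ℕ → α) : Prop :=
  ∀ l, t l = par l (t (l + 1))

theorem IsThread.eqOn_Iic {α : Type*} {par : ℕ → α → α} {t t' : ℕ → α}
    (ht : IsThread par t) (ht' : IsThread par t') {m : ℕ} (hm : t m = t' m) :
    EqOn t t' (Iic m) := fun l hl =>
  Nat.decreasingInduction (motive := fun k _ => t k = t' k)
    (fun k _ hk => by rw [ht k, ht' k, hk]) hm hl

/-- Kőnig's lemma, from the compactness of `∏ l, S l`. -/
theorem exists_isThread_forall_mem {α : Type*} {par : ℕ → α → α} {S : ℕ → Set α}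
    (hfin : ∀ l, (S l).Finite) (hne : ∀ l, (S l).Nonempty)
    (hpar : ∀ l, MapsTo (par l) (S (l + 1)) (S l)) :
    ∃ t, IsThread par t ∧ ∀ l, t l ∈ S l := by
  let _ : TopologicalSpace α := ⊥
  have : DiscreteTopology α := ⟨rfl⟩
  let K : ℕ → Set (ℕ → α) := fun L => univ.pi S ∩ {t | ∀ l < L, t l = par l (t (l + 1))}
  have hK_closed : ∀ L, IsClosed (K L) := fun L =>
    (isClosed_set_pi fun l _ => isClosed_discrete (S l)).inter <| by
      simp only [ofPred_forall]
      exact isClosed_iInter fun l => isClosed_iInter fun _ =>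
        isClosed_eq (continuous_apply l) (continuous_of_discreteTopology.comp (continuous_apply _))
  have hK_nonempty : ∀ L, ∀ j ∈ S L, ∃ t ∈ K L, t L = j := by
    choose t₀ ht₀ using hne
    intro L
    induction L with
    | zero =>
      refine fun j hj => ⟨update t₀ 0 j, ⟨fun l _ => ?_, fun l hl => absurd hl l.not_lt_zero⟩,
        by simp⟩
      rcases eq_or_ne l 0 with rfl | hl <;> simp [*]
    | succ L ih =>
      intro j hj
      obtain ⟨t, ⟨htS, htpar⟩, htL⟩ := ih (par L j) (hpar L hj)
      refine ⟨update t (L + 1) j, ⟨fun l _ => ?_, fun l hl => ?_⟩, by simp⟩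
      · rcases eq_or_ne l (L + 1) with rfl | hl
        · simpa
        · simpa [hl] using htS l trivial
      · rcases eq_or_ne l L with rfl | hlL
        · simp [htL]
        · simp [update_of_ne (by omega : l ≠ L + 1), update_of_ne (by omega : l + 1 ≠ L + 1),
            htpar l (by omega)]
  obtain ⟨t, ht⟩ := IsCompact.nonempty_iInter_of_sequence_nonempty_isCompact_isClosed K
    (fun L => inter_subset_inter_right _ fun t ht l hl => ht l (by omega))
    (fun L => let ⟨j, hj⟩ := hne L; let ⟨t, ht, _⟩ := hK_nonempty L j hj; ⟨t, ht⟩)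
    ((isCompact_univ_pi fun l => (hfin l).isCompact).inter_right (by simp))
    hK_closed
  simp only [mem_iInter] at ht
  exact ⟨t, fun l => (ht (l + 1)).2 l (by omega), fun l => (ht 0).1 l trivial⟩

theorem exists_seq_of_forall_exists_succ {α : Type*} {P : α → Prop} {R : ℕ → α → α → Prop}
    (h₀ : ∃ a, P a) (h : ∀ l a, P a → ∃ b, P b ∧ R l a b) :
    ∃ f : ℕ → α, ∀ l, P (f l) ∧ R l (f l) (f (l + 1)) := by
  have : Nonempty α := h₀.nonempty
  choose! next hnext using h
  let f : ℕ → α := fun l => Nat.rec h₀.choose (fun l a => next l a) l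
  have hf : ∀ l, P (f l) := fun l => by
    induction l with
    | zero => exact h₀.choose_spec
    | succ l ih => exact (hnext l _ ih).1
  exact ⟨f, fun l => ⟨hf l, (hnext l _ (hf l)).2⟩⟩

section Tower

variable {X : Type*} [TopologicalSpace X] {n : ℕ}

theorem CovDimLE.exists_precise_refinement (h : CovDimLE X n) {ι : Type*} [Nonempty ι]
    {Ω : ι → Set X} (hfin : (range Ω).Finite) (ho : ∀ j, IsOpen (Ω j)) (hc : ⋃ j, Ω j = univ) :
    ∃ A : ι → Set X, (∀ j, IsOpen (A j)) ∧ ⋃ j, A j = univ ∧ (∀ j, A j ⊆ Ω j) ∧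
      {j | (A j).Nonempty}.Finite ∧ ∀ x, {j | x ∈ A j}.ncard ≤ n + 1 := by
  obtain ⟨𝒱, h𝒱fin, h𝒱o, h𝒱c, h𝒱ref, h𝒱ord⟩ :=
    h (range Ω) hfin (forall_mem_range.2 ho) (sUnion_range Ω ▸ hc)
  have : ∀ V ∈ 𝒱, ∃ j, V ⊆ Ω j := fun V hV => by
    obtain ⟨_, ⟨j, rfl⟩, hVj⟩ := h𝒱ref V hV
    exact ⟨j, hVj⟩
  choose! g hg using this
  refine ⟨fun j => ⋃₀ {V ∈ 𝒱 | g V = j}, fun j => isOpen_sUnion fun V hV => h𝒱o V hV.1,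
    eq_univ_of_forall fun x => ?_, fun j => sUnion_subset fun V ⟨hV, hgV⟩ => hgV ▸ hg V hV,
    (h𝒱fin.image g).subset ?_, fun x => ?_⟩
  · obtain ⟨V, hV, hxV⟩ : x ∈ ⋃₀ 𝒱 := h𝒱c ▸ mem_univ x
    exact mem_iUnion.2 ⟨g V, V, ⟨hV, rfl⟩, hxV⟩
  · rintro _ ⟨x, V, ⟨hV, rfl⟩, -⟩
    exact mem_image_of_mem g hV
  · have hsub : {j | x ∈ ⋃₀ {V ∈ 𝒱 | g V = j}} ⊆ g '' {V ∈ 𝒱 | x ∈ V} := by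
      rintro _ ⟨V, ⟨hV, rfl⟩, hxV⟩
      exact mem_image_of_mem g ⟨hV, hxV⟩
    have hfin𝒱x : {V ∈ 𝒱 | x ∈ V}.Finite := h𝒱fin.subset (sep_subset _ _)
    calc {j | x ∈ ⋃₀ {V ∈ 𝒱 | g V = j}}.ncard ≤ (g '' {V ∈ 𝒱 | x ∈ V}).ncard :=
          ncard_le_ncard hsub (hfin𝒱x.image g)
      _ ≤ {V ∈ 𝒱 | x ∈ V}.ncard := ncard_image_le hfin𝒱x
      _ ≤ n + 1 := by exact_mod_cast h𝒱ord x

structure IsFiniteOpenCoverOfOrder {ι : Type*} (n : ℕ) (G : ι → Set X) : Prop where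
  isOpen : ∀ i, IsOpen (G i)
  iUnion_eq : ⋃ i, G i = univ
  finite_nonempty : {i | (G i).Nonempty}.Finite
  ncard_closure_le : ∀ x, {i | x ∈ closure (G i)}.ncard ≤ n + 1

theorem IsFiniteOpenCoverOfOrder.finite_range {ι : Type*} {G : ι → Set X}
    (hG : IsFiniteOpenCoverOfOrder n G) : (range G).Finite :=
  ((hG.finite_nonempty.image G).insert ∅).subset <| by
    rintro _ ⟨i, rfl⟩
    rcases (G i).eq_empty_or_nonempty with hi | hi
    exacts [Or.inl hi, Or.inr (mem_image_of_mem G hi)]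

theorem isFiniteOpenCoverOfOrder_ite_univ :
    IsFiniteOpenCoverOfOrder n fun i : ℕ => if i = 0 then (univ : Set X) else ∅ := by
  have hsub : ∀ p : Set X → Prop, ¬ p ∅ →
      {i : ℕ | p (if i = 0 then univ else ∅)} ⊆ {0} := fun p hp i hi => by
    by_contra hi0
    simp_all
  refine ⟨fun i => ?_, eq_univ_of_forall fun x => mem_iUnion.2 ⟨0, by simp⟩,
    (finite_singleton 0).subset (hsub _ not_nonempty_empty), fun x =>
      (ncard_le_ncard (hsub (x ∈ closure ·) (by simp)) (finite_singleton 0)).trans (by simp)⟩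
  split_ifs <;> simp

theorem CovDimLE.exists_shrinking [NormalSpace X] (h : CovDimLE X n) {ι : Type*} [Nonempty ι]
    {Ω : ι → Set X} (hfin : (range Ω).Finite) (ho : ∀ j, IsOpen (Ω j)) (hc : ⋃ j, Ω j = univ) :
    ∃ B : ι → Set X, IsFiniteOpenCoverOfOrder n B ∧ ∀ j, B j ⊆ Ω j := by
  obtain ⟨A, hAo, hAc, hAΩ, hAfin, hAord⟩ := h.exists_precise_refinement hfin ho hc
  have hApt : ∀ x, {j | x ∈ A j}.Finite := fun x => hAfin.subset fun j hj => ⟨x, hj⟩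
  obtain ⟨B, hBc, hBo, hBA⟩ := exists_iUnion_eq_closure_subset hAo hApt hAc
  refine ⟨B, ⟨hBo, hBc, hAfin.subset fun j ⟨x, hx⟩ => ⟨x, hBA j (subset_closure hx)⟩, fun x => ?_⟩,
    fun j => subset_closure.trans ((hBA j).trans (hAΩ j))⟩
  exact (ncard_le_ncard (fun j hj => hBA j hj) (hApt x)).trans (hAord x)

theorem CovDimLE.exists_refinement_inter [NormalSpace X] (h : CovDimLE X n) {G : ℕ → Set X}
    (hG : IsFiniteOpenCoverOfOrder n G) {C : Bool → Set X} (hCo : ∀ b, IsOpen (C b))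
    (hCc : ⋃ b, C b = univ) :
    ∃ G' : ℕ → Set X, IsFiniteOpenCoverOfOrder n G' ∧ ∀ k, ∃ i b, G' k ⊆ G i ∩ C b := by
  let e := Equiv.boolProdNatEquivNat
  let Ω : ℕ → Set X := fun k => G (e.symm k).2 ∩ C (e.symm k).1
  have hΩfin : (range Ω).Finite := (hG.finite_range.image2 (· ∩ ·) (finite_range C)).subset <| by
    rintro _ ⟨k, rfl⟩
    exact mem_image2_of_mem (mem_range_self _) (mem_range_self _)
  have hΩc : ⋃ k, Ω k = univ := eq_univ_of_forall fun x => by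
    obtain ⟨i, hi⟩ := mem_iUnion.1 (hG.iUnion_eq ▸ mem_univ x)
    obtain ⟨b, hb⟩ := mem_iUnion.1 (hCc ▸ mem_univ x)
    exact mem_iUnion.2 ⟨e (b, i), by simpa [Ω] using ⟨hi, hb⟩⟩
  obtain ⟨G', hG', hG'Ω⟩ := h.exists_shrinking hΩfin (fun k => (hG.isOpen _).inter (hCo _)) hΩc
  exact ⟨G', hG', fun k => ⟨_, _, hG'Ω k⟩⟩

structure IsClosedCoverTower (n : ℕ) (F : ℕ → ℕ → Set X) (par : ℕ → ℕ → ℕ) : Prop where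
  isClosed : ∀ l i, IsClosed (F l i)
  iUnion_eq : ∀ l, ⋃ i, F l i = univ
  finite_nonempty : ∀ l, {i | (F l i).Nonempty}.Finite
  ncard_le : ∀ l x, {i | x ∈ F l i}.ncard ≤ n + 1
  subset_par : ∀ l i, F (l + 1) i ⊆ F l (par l i)
  separates : ∀ x y, x ≠ y → ∃ l, ∀ i, x ∈ F l i → y ∉ F l i

theorem exists_isClosedCoverTower [NormalSpace X] (h : CovDimLE X n) {C : ℕ → Bool → Set X}
    (hCo : ∀ l b, IsOpen (C l b)) (hCc : ∀ l, ⋃ b, C l b = univ)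
    (hsep : ∀ x y, x ≠ y → ∃ l, ∀ b, x ∈ closure (C l b) → y ∉ closure (C l b)) :
    ∃ (F : ℕ → ℕ → Set X) (par : ℕ → ℕ → ℕ), IsClosedCoverTower n F par := by
  obtain ⟨G, hG⟩ := exists_seq_of_forall_exists_succ ⟨_, isFiniteOpenCoverOfOrder_ite_univ⟩
    fun l _ hG => h.exists_refinement_inter hG (hCo l) (hCc l)
  choose par b hpar using fun l => (hG l).2
  refine ⟨fun l i => closure (G l i), par,
    { isClosed := fun _ _ => isClosed_closure
      iUnion_eq := fun l => univ_subset_iff.1 <|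
        (hG l).1.iUnion_eq ▸ iUnion_mono fun i => subset_closure
      finite_nonempty := fun l => by
        simpa only [closure_nonempty_iff] using (hG l).1.finite_nonempty
      ncard_le := fun l => (hG l).1.ncard_closure_le
      subset_par := fun l i => closure_mono ((hpar l i).trans inter_subset_left)
      separates := fun x y hxy => ?_ }⟩
  obtain ⟨l, hl⟩ := hsep x y hxy
  have hC : ∀ k, closure (G (l + 1) k) ⊆ closure (C l (b l k)) := fun k =>
    closure_mono ((hpar l k).trans inter_subset_right)
  exact ⟨l + 1, fun k hx hy => hl (b l k) (hC k hx) (hC k hy)⟩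

namespace IsClosedCoverTower

variable {F : ℕ → ℕ → Set X} {par : ℕ → ℕ → ℕ}

theorem finite_setOf_mem (hF : IsClosedCoverTower n F par) (l : ℕ) (x : X) :
    {i | x ∈ F l i}.Finite :=
  (hF.finite_nonempty l).subset fun _ hi => ⟨x, hi⟩

theorem exists_isThread (hF : IsClosedCoverTower n F par) (x : X) :
    ∃ t, IsThread par t ∧ ∀ l, x ∈ F l (t l) :=
  exists_isThread_forall_mem (S := fun l => {i | x ∈ F l i}) (hF.finite_setOf_mem · x)
    (fun l => mem_iUnion.1 (hF.iUnion_eq l ▸ mem_univ x))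
    (fun l i hi => hF.subset_par l i hi)

theorem eventually_subset (hF : IsClosedCoverTower n F par) (l : ℕ) (x : X) :
    ∀ᶠ y in 𝓝 x, {i | y ∈ F l i} ⊆ {i | x ∈ F l i} :=
  LocallyFinite.eventually_subset
    (fun _ => ⟨univ, univ_mem, (hF.finite_nonempty l).subset fun _ hi => hi.mono inter_subset_left⟩)
    (hF.isClosed l) x

end IsClosedCoverTower

end Tower

theorem snakeNumSpace_le_of_forall {M : Type*} [MetricSpace M] {T : M → M → Prop} {k : ℕ}
    (h : ∀ x y, x ≠ y → ∀ s, (∀ ε > 0, HasSnake T (ball x ε) (ball y ε) s) → s ≤ k) :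
    snakeNumSpace T ≤ k :=
  iSup_le fun x => iSup_le fun y => iSup_le fun hxy => iSup₂_le fun s hs => by
    exact_mod_cast h x y hxy s hs

namespace IsClosedCoverTower

variable {M : Type*} [MetricSpace M] {n : ℕ} {F : ℕ → ℕ → Set M} {par : ℕ → ℕ → ℕ}

theorem le_of_forall_hasSnake_ball (hF : IsClosedCoverTower n F par) {c : M → ℕ → ℕ}
    (hc : ∀ x, IsThread par (c x) ∧ ∀ l, x ∈ F l (c x l)) {x y : M} (hxy : x ≠ y) {s : ℕ}
    (hs : ∀ ε > 0, HasSnake (fun a b => toLex (c a) < toLex (c b)) (ball x ε) (ball y ε) s) :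
    s ≤ 2 * n + 1 := by
  obtain ⟨m, hm⟩ := hF.separates x y hxy
  set Sx := {i | x ∈ F m i}
  set Sy := {i | y ∈ F m i}
  obtain ⟨εx, hεx, hx⟩ := Metric.eventually_nhds_iff_ball.1 (hF.eventually_subset m x)
  obtain ⟨εy, hεy, hy⟩ := Metric.eventually_nhds_iff_ball.1 (hF.eventually_subset m y)
  obtain ⟨a, ha, ha_even, ha_odd⟩ := hs (min εx εy) (lt_min hεx hεy)
  have hmem_even : ∀ i : Fin (s + 1), Even (i : ℕ) → c (a i) m ∈ Sx := fun i hi =>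
    hx _ (ball_subset_ball (min_le_left _ _) (ha_even i hi)) ((hc _).2 m)
  have hmem_odd : ∀ i : Fin (s + 1), Odd (i : ℕ) → c (a i) m ∈ Sy := fun i hi =>
    hy _ (ball_subset_ball (min_le_right _ _) (ha_odd i hi)) ((hc _).2 m)
  have hinj : Injective fun i => c (a i) m := by
    refine injective_apply_of_strictMono_toLex (fun i j hij => ha i j hij)
      (fun i j h => (hc _).1.eqOn_Iic (hc _).1 h) fun k hk => ?_
    rcases Nat.even_or_odd k with hk' | hk'
    · exact hm _ (hmem_even _ hk') (hk ▸ hmem_odd k.succ (by simpa using hk'.add_one))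
    · exact hm _ (hk ▸ hmem_even k.succ (by simpa using hk'.add_one)) (hmem_odd _ hk')
  have hrange : range (fun i => c (a i) m) ⊆ Sx ∪ Sy := by
    rintro _ ⟨i, rfl⟩
    rcases Nat.even_or_odd i with hi | hi
    exacts [Or.inl (hmem_even i hi), Or.inr (hmem_odd i hi)]
  have hcard : s + 1 ≤ (n + 1) + (n + 1) :=
    calc s + 1 = (range fun i => c (a i) m).ncard := by
          rw [ncard_range_of_injective hinj, Nat.card_eq_fintype_card, Fintype.card_fin]
      _ ≤ (Sx ∪ Sy).ncard :=
          ncard_le_ncard hrange ((hF.finite_setOf_mem m x).union (hF.finite_setOf_mem m y))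
      _ ≤ Sx.ncard + Sy.ncard := ncard_union_le _ _
      _ ≤ (n + 1) + (n + 1) := add_le_add (hF.ncard_le m x) (hF.ncard_le m y)
  omega

theorem exists_order_snake_le (hF : IsClosedCoverTower n F par) :
    ∃ T : M → M → Prop, IsStrictTotalOrder M T ∧ snakeNumSpace T ≤ ((2 * n + 1 : ℕ) : ℕ∞) := by
  choose c hc using hF.exists_isThread
  have hinj : Injective fun x => toLex (c x) := fun x y hxy => by
    by_contra hne
    obtain ⟨l, hl⟩ := hF.separates x y hne
    exact hl _ ((hc x).2 l) (congrFun (toLex.injective hxy) l ▸ (hc y).2 l)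
  let _ := LinearOrder.lift' _ hinj
  exact ⟨(· < ·), inferInstance, snakeNumSpace_le_of_forall fun x y hxy s hs =>
    hF.le_of_forall_hasSnake_ball hc hxy hs⟩

end IsClosedCoverTower

theorem exists_binary_open_covers_separating (M : Type*) [MetricSpace M]
    [TopologicalSpace.SeparableSpace M] :
    ∃ C : ℕ → Bool → Set M, (∀ l b, IsOpen (C l b)) ∧ (∀ l, ⋃ b, C l b = univ) ∧
      ∀ x y, x ≠ y → ∃ l, ∀ b, x ∈ closure (C l b) → y ∉ closure (C l b) := by
  rcases isEmpty_or_nonempty M with hM | hM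
  · exact ⟨fun _ _ => ∅, fun _ _ => isOpen_empty, fun _ => eq_univ_of_forall isEmptyElim,
      fun x => isEmptyElim x⟩
  let q := TopologicalSpace.denseSeq M
  let r : ℕ → ℝ := fun k => 1 / (k + 1)
  have hr : ∀ k, 0 < r k := fun k => by positivity
  let C : ℕ → Bool → Set M := fun l b =>
    cond b (ball (q l.unpair.1) (2 * r l.unpair.2)) (closedBall (q l.unpair.1) (r l.unpair.2))ᶜ
  refine ⟨C, fun l b => ?_, fun l => ?_, fun x y hxy => ?_⟩
  · cases b
    exacts [isClosed_closedBall.isOpen_compl, isOpen_ball]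
  · simp only [C, ← union_eq_iUnion]
    refine eq_univ_of_forall fun z => ?_
    by_cases hz : z ∈ closedBall (q l.unpair.1) (r l.unpair.2)
    · exact Or.inl (mem_ball.2 ((mem_closedBall.1 hz).trans_lt (by linarith [hr l.unpair.2])))
    · exact Or.inr hz
  obtain ⟨k, hk⟩ : ∃ k, r k < dist x y / 3 :=
    exists_nat_one_div_lt (div_pos (dist_pos.2 hxy) three_pos)
  obtain ⟨a, ha⟩ := Metric.denseRange_iff.1 (TopologicalSpace.denseRange_denseSeq M) x (r k) (hr k)
  refine ⟨Nat.pair a k, fun b hxb hyb => ?_⟩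
  cases b
  · simp only [C, Nat.unpair_pair, cond_false, closure_compl] at hxb
    exact hxb (ball_subset_interior_closedBall (mem_ball.2 ha))
  · simp only [C, Nat.unpair_pair, cond_true] at hyb
    have hy := mem_closedBall.1 (closure_ball_subset_closedBall hyb)
    linarith [dist_triangle_right x y (q a)]

/-- **Theorem B for separable spaces.** If `M` is a separable metric space with covering
dimension at most `n`, then there exists a total order `T` on `M` with
`Snake(M,T) ≤ 2n + 1`. -/
theorem exists_order_snake_le_of_covDim_le_separable
    {M : Type*} [MetricSpace M] [TopologicalSpace.SeparableSpace M]
    (n : ℕ) (h : CovDimLE M (n : ℤ)) :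
    ∃ T : M → M → Prop, IsStrictTotalOrder M T ∧
      snakeNumSpace T ≤ ((2 * n + 1 : ℕ) : ℕ∞) := by
  obtain ⟨C, hCo, hCc, hsep⟩ := exists_binary_open_covers_separating M
  obtain ⟨F, par, hF⟩ := exists_isClosedCoverTower h hCo hCc hsep
  exact hF.exists_order_snake_le
end

section
/- Let M be a compact metric space, let (U_i)_{i≥0} be a sequence of finite open covers of M such that every set in U_i has diameter at most 2^{−i}, and for each i ≥ 1 let f : U_i → U_{i−1} be a map with U ⊆ f(U) for all U ∈ U_i. Then for every point x ∈ M there exists a chain, i.e. a sequence of sets (U₀, U₁, U₂, …) with U_i ∈ U_i and U_{i−1} = f(U_i) for all i ≥ 1, such that x ∈ U_i for every i (equivalently, {x} is the intersection of the closures of the elements of the chain). -/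
open Metric Set

/-!
The sets of `𝒰 i` that contain `x` form a finite nonempty family for each `i`, and `f i` maps
the family at level `i + 1` into the one at level `i`; Kőnig's lemma for this inverse sequence
yields a chain through `x`. Since the diameters of its members tend to `0`, their closures
meet in `x` alone.
-/

open CategoryTheory Filter Topology

theorem exists_seq_of_finite_inverse_sequence {α : ℕ → Type*} [∀ n, Finite (α n)]
    [∀ n, Nonempty (α n)] (g : ∀ n, α (n + 1) → α n) :
    ∃ a : ∀ n, α n, ∀ n, g n (a (n + 1)) = a n := by
  let F := Functor.ofOpSequence (X := α) fun n ↦ TypeCat.ofHom (g n)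
  have : ∀ n, Finite (F.obj n) := fun n ↦ inferInstanceAs (Finite (α n.unop))
  have : ∀ n, Nonempty (F.obj n) := fun n ↦ inferInstanceAs (Nonempty (α n.unop))
  obtain ⟨a, ha⟩ := nonempty_sections_of_finite_inverse_system F
  refine ⟨fun n ↦ a (Opposite.op n), fun n ↦ ?_⟩
  have := ha (homOfLE n.le_succ).op
  rwa [Functor.ofOpSequence_map_homOfLE_succ] at this

theorem exists_chain_through_point_of_finite_covers {M : Type*} (𝒰 : ℕ → Set (Set M))
    (hfin : ∀ i, (𝒰 i).Finite) (hcover : ∀ i, ⋃₀ 𝒰 i = univ) (f : ℕ → Set M → Set M)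
    (hf : ∀ i, ∀ U ∈ 𝒰 (i + 1), f i U ∈ 𝒰 i ∧ U ⊆ f i U) (x : M) :
    ∃ c : ℕ → Set M, (∀ i, c i ∈ 𝒰 i) ∧ (∀ i, c i = f i (c (i + 1))) ∧ ∀ i, x ∈ c i := by
  let α i := {U // U ∈ 𝒰 i ∧ x ∈ U}
  have : ∀ i, Finite (α i) := fun i ↦ ((hfin i).subset fun _ hU ↦ hU.1).to_subtype
  have : ∀ i, Nonempty (α i) := fun i ↦ by
    obtain ⟨U, hU, hxU⟩ := mem_sUnion.1 (hcover i ▸ mem_univ x)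
    exact ⟨⟨U, hU, hxU⟩⟩
  let g i (U : α (i + 1)) : α i := ⟨f i U, (hf i U U.2.1).1, (hf i U U.2.1).2 U.2.2⟩
  obtain ⟨a, ha⟩ := exists_seq_of_finite_inverse_sequence g
  exact ⟨fun i ↦ a i, fun i ↦ (a i).2.1, fun i ↦ congrArg Subtype.val (ha i).symm,
    fun i ↦ (a i).2.2⟩

theorem iInter_closure_eq_singleton {M : Type*} [MetricSpace M] {c : ℕ → Set M} {x : M}
    (hx : ∀ i, x ∈ c i) (hbdd : ∀ i, Bornology.IsBounded (c i))
    (hdiam : Tendsto (fun i ↦ diam (c i)) atTop (𝓝 0)) :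
    ⋂ i, closure (c i) = {x} := by
  refine Subset.antisymm (fun y hy ↦ ?_) (singleton_subset_iff.2 <|
    mem_iInter.2 fun i ↦ subset_closure (hx i))
  have hdist : ∀ i, dist y x ≤ diam (c i) := fun i ↦ by
    rw [← diam_closure]
    exact dist_le_diam_of_mem (hbdd i).closure (mem_iInter.1 hy i) (subset_closure (hx i))
  exact dist_le_zero.1 (ge_of_tendsto' hdiam hdist)

theorem exists_chain_through_point_general
    {M : Type*} [MetricSpace M] [CompactSpace M]
    (𝒰 : ℕ → Set (Set M))
    (hfin : ∀ i, (𝒰 i).Finite)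
    (hcover : ∀ i, ⋃₀ 𝒰 i = Set.univ)
    (hdiam : ∀ i, ∀ U ∈ 𝒰 i, Metric.diam U ≤ (1 / 2 : ℝ) ^ i)
    (f : ℕ → Set M → Set M)
    (hf : ∀ i, ∀ U ∈ 𝒰 (i + 1), f i U ∈ 𝒰 i ∧ U ⊆ f i U) :
    ∀ x : M, ∃ c : ℕ → Set M,
      (∀ i, c i ∈ 𝒰 i) ∧
      (∀ i, c i = f i (c (i + 1))) ∧
      (∀ i, x ∈ c i) ∧
      (⋂ i, closure (c i)) = {x} := by
  intro x
  obtain ⟨c, hc𝒰, hcf, hxc⟩ := exists_chain_through_point_of_finite_covers 𝒰 hfin hcover f hf x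
  refine ⟨c, hc𝒰, hcf, hxc, iInter_closure_eq_singleton hxc
    (fun i ↦ isCompact_univ.isBounded.subset (subset_univ _)) ?_⟩
  exact squeeze_zero (fun i ↦ diam_nonneg) (fun i ↦ hdiam i _ (hc𝒰 i))
    (tendsto_pow_atTop_nhds_zero_of_lt_one (by norm_num) (by norm_num))

/-- Every point of a compact metric space is the intersection of (the closures of) the
elements of some chain: given finite open covers `𝒰 i` with sets of diameter at most
`2⁻ⁱ` and maps `f i : 𝒰 (i+1) → 𝒰 i` with `U ⊆ f i U`, for every `x` there is a sequence
`c` with `c i ∈ 𝒰 i`, `c i = f i (c (i+1))`, `x ∈ c i` for all `i`, and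
`⋂ i, closure (c i) = {x}`. -/
theorem exists_chain_through_point
    {M : Type*} [MetricSpace M] [CompactSpace M]
    (𝒰 : ℕ → Set (Set M))
    (hfin : ∀ i, (𝒰 i).Finite)
    (hopen : ∀ i, ∀ U ∈ 𝒰 i, IsOpen U)
    (hcover : ∀ i, ⋃₀ 𝒰 i = Set.univ)
    (hdiam : ∀ i, ∀ U ∈ 𝒰 i, Metric.diam U ≤ (1 / 2 : ℝ) ^ i)
    (f : ℕ → Set M → Set M)
    (hf : ∀ i, ∀ U ∈ 𝒰 (i + 1), f i U ∈ 𝒰 i ∧ U ⊆ f i U) :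
    ∀ x : M, ∃ c : ℕ → Set M,
      (∀ i, c i ∈ 𝒰 i) ∧
      (∀ i, c i = f i (c (i + 1))) ∧
      (∀ i, x ∈ c i) ∧
      (⋂ i, closure (c i)) = {x} :=
  exists_chain_through_point_general 𝒰 hfin hcover hdiam f hf
end

section
/- Let M be a compact metric space with Lebesgue covering dimension dim M ≥ n, and let C denote the Cantor set. Suppose f : A → M is a continuous surjection from a closed subset A of C onto M. Then there exist n+1 points x₀, …, x_n ∈ A with equal images under f at the positions prescribed by Hurewicz's theorem; in particular there exist n+1 distinct points of A mapped by f to a single point of M. -/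
open Metric Set

open Filter Function Topology TopologicalSpace

/-! If every fibre of `f` has at most `n` points, pull a finite open cover of `M` back along `f`
and refine it by a finite partition of the compact, totally disconnected space `A` into clopen
sets. Their images form a closed cover of `M` refining the given one, in which no point `y` lies
in more than `n` members: the members containing `y` are images of disjoint pieces, each meeting
the fibre over `y`. Thickening these closed sets by a small enough `δ` keeps every empty
intersection empty, which yields an open refinement of order `≤ n - 1`. -/

theorem isTotallyDisconnected_cantorSet : IsTotallyDisconnected cantorSet :=
  totallyDisconnectedSpace_subtype_iff.1 cantorSetHomeomorphNatToBool.symm.totallyDisconnectedSpace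

section Swelling

variable {M : Type*} [MetricSpace M] {ι : Type*}

theorem eventually_biInter_thickening_eq_empty [CompactSpace M] {F : ι → Set M} {s : Set ι}
    (hF : ∀ i ∈ s, IsClosed (F i)) (h : ⋂ i ∈ s, F i = ∅) :
    ∀ᶠ δ in 𝓝[>] 0, ⋂ i ∈ s, thickening δ (F i) = ∅ := by
  have hcover : univ ⊆ ⋃ i : s, (F i)ᶜ := by
    intro y _
    simpa using (h.symm ▸ notMem_empty y : y ∉ ⋂ i ∈ s, F i)
  obtain ⟨δ₀, hδ₀, hball⟩ := lebesgue_number_lemma_of_metric isCompact_univ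
    (fun i : s => (hF i i.2).isOpen_compl) hcover
  filter_upwards [Ioo_mem_nhdsGT hδ₀] with δ hδ
  refine eq_empty_of_forall_notMem fun y hy => ?_
  obtain ⟨i, hi⟩ := hball y trivial
  obtain ⟨z, hz, hyz⟩ := mem_thickening_iff.1 (mem_iInter₂.1 hy i i.2)
  exact hi (mem_ball'.2 (hyz.trans hδ.2)) hz

theorem IsCompact.eventually_thickening_subset {K U : Set M} (hK : IsCompact K) (hU : IsOpen U)
    (hKU : K ⊆ U) : ∀ᶠ δ in 𝓝[>] 0, thickening δ K ⊆ U := by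
  obtain ⟨δ₀, hδ₀, hδ₀U⟩ := hK.exists_thickening_subset_open hU hKU
  filter_upwards [Ioo_mem_nhdsGT hδ₀] with δ hδ
  exact (thickening_mono hδ.2.le K).trans hδ₀U

-- The last clause says that the `V i` have the same nerve as the `F i`.
theorem exists_isOpen_swelling [CompactSpace M] [Finite ι] {F U : ι → Set M}
    (hF : ∀ i, IsClosed (F i)) (hU : ∀ i, IsOpen (U i)) (hFU : ∀ i, F i ⊆ U i) :
    ∃ V : ι → Set M, (∀ i, IsOpen (V i)) ∧ (∀ i, F i ⊆ V i) ∧ (∀ i, V i ⊆ U i) ∧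
      ∀ y, ∃ z, ∀ i, y ∈ V i → z ∈ F i := by
  have hsub : ∀ᶠ δ in 𝓝[>] 0, ∀ i, thickening δ (F i) ⊆ U i :=
    eventually_all.2 fun i => (hF i).isCompact.eventually_thickening_subset (hU i) (hFU i)
  have hnerve : ∀ᶠ δ in 𝓝[>] 0, ∀ s : Set ι,
      ⋂ i ∈ s, F i = ∅ → ⋂ i ∈ s, thickening δ (F i) = ∅ :=
    eventually_all.2 fun s => eventually_imp_distrib_left.2
      (eventually_biInter_thickening_eq_empty fun i _ => hF i)
  obtain ⟨δ, ⟨hδU, hδnerve⟩, hδ⟩ := ((hsub.and hnerve).and self_mem_nhdsWithin).exists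
  refine ⟨fun i => thickening δ (F i), fun _ => isOpen_thickening,
    fun i => self_subset_thickening hδ (F i), hδU, fun y => ?_⟩
  by_contra! hy
  have hempty : ⋂ i ∈ {i | y ∈ thickening δ (F i)}, F i = ∅ :=
    eq_empty_of_forall_notMem fun z hz =>
      let ⟨i, hyi, hzi⟩ := hy z
      hzi (mem_iInter₂.1 hz i hyi)
  simpa using (hδnerve _ hempty).subset (mem_iInter₂.2 fun i hi => hi)

end Swelling

theorem encard_setOf_mem_image_le {X M ι : Type*} (f : X → M) {W : ι → Set X}
    (hW : Pairwise (Disjoint on W)) (y : M) :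
    {i | y ∈ f '' W i}.encard ≤ (f ⁻¹' {y}).encard :=
  Embedding.encard_le
    { toFun := fun i => ⟨i.2.choose, i.2.choose_spec.2⟩
      inj' := by
        rintro ⟨i, hi⟩ ⟨j, hj⟩ hij
        have hij' : hi.choose = hj.choose := congrArg Subtype.val hij
        exact Subtype.ext <| hW.eq <| not_disjoint_iff.2
          ⟨_, hi.choose_spec.1, hij' ▸ hj.choose_spec.1⟩ }

theorem covDimLE_of_encard_fiber_le {X M : Type*} [TopologicalSpace X] [CompactSpace X]
    [T2Space X] [TotallyDisconnectedSpace X] [MetricSpace M] [CompactSpace M] {f : X → M}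
    (hf : Continuous f) (hsurj : Surjective f) {n : ℕ}
    (hfib : ∀ y, (f ⁻¹' {y}).encard ≤ n) : CovDimLE M ((n : ℤ) - 1) := by
  intro 𝒰 _ h𝒰open h𝒰cover
  have hpullback : IsOpenCover fun U : 𝒰 => (⟨f ⁻¹' U, (h𝒰open U U.2).preimage hf⟩ : Opens X) :=
    IsOpenCover.of_sets _ (by rw [← preimage_iUnion, ← sUnion_eq_iUnion, h𝒰cover, preimage_univ])
  obtain ⟨k, W, hW, hWcover, hWdisj⟩ := hpullback.exists_finite_nonempty_disjoint_clopen_cover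
  choose U hU using fun j => (hW j).2
  set F : Fin k → Set M := fun j => f '' W j
  have hFcover : ⋃ j, F j = univ := by
    rw [← image_iUnion, univ_subset_iff.1 hWcover, image_univ, hsurj.range_eq]
  obtain ⟨V, hVopen, hFV, hVU, hVF⟩ := exists_isOpen_swelling (U := fun j => (U j : Set M))
    (fun j => ((W j).isClosed.isCompact.image hf).isClosed) (fun j => h𝒰open _ (U j).2)
    (fun j => image_subset_iff.2 (hU j))
  have hVcover : ⋃₀ range V = univ := by
    rw [sUnion_range, ← univ_subset_iff, ← hFcover]
    exact iUnion_mono hFV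
  refine ⟨range V, finite_range V, forall_mem_range.2 hVopen, hVcover,
    forall_mem_range.2 fun j => ⟨U j, (U j).2, hVU j⟩, fun x => ?_⟩
  obtain ⟨z, hz⟩ := hVF x
  have hsub : {W ∈ range V | x ∈ W} ⊆ V '' {j | z ∈ F j} := by
    rintro _ ⟨⟨j, rfl⟩, hxj⟩
    exact ⟨j, hz j hxj, rfl⟩
  have hdisj : Pairwise (Disjoint on fun j => (W j : Set X)) :=
    fun i j hij => Clopens.coe_disjoint.2 (hWdisj hij)
  have hcard : {W ∈ range V | x ∈ W}.encard ≤ n :=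
    calc {W ∈ range V | x ∈ W}.encard ≤ (V '' {j | z ∈ F j}).encard := encard_le_encard hsub
      _ ≤ {j | z ∈ F j}.encard := encard_image_le _ _
      _ ≤ (f ⁻¹' {z}).encard := encard_setOf_mem_image_le f hdisj z
      _ ≤ n := hfib z
  rw [← (toFinite _).cast_ncard_eq, Nat.cast_le] at hcard
  simpa using hcard

/-- **Hurewicz-type theorem.** If `M` is a compact metric space with covering dimension
`≥ n` and `f : A → M` is a continuous surjection from a closed subset `A` of the Cantor
set, then there exist `n + 1` distinct points of `A` mapped by `f` to a single point. -/
theorem exists_fiber_with_card_ge_of_covDim_ge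
    {M : Type*} [MetricSpace M] [CompactSpace M]
    (n : ℕ) (hdim : ¬ CovDimLE M ((n : ℤ) - 1))
    (A : Set ℝ) (hA : IsClosed A) (hAC : A ⊆ cantorSet)
    (f : A → M) (hf : Continuous f) (hsurj : Function.Surjective f) :
    ∃ x : Fin (n + 1) → A, Function.Injective x ∧
      ∀ i j : Fin (n + 1), f (x i) = f (x j) := by
  have : CompactSpace A :=
    isCompact_iff_compactSpace.1 (isCompact_cantorSet.of_isClosed_subset hA hAC)
  have : TotallyDisconnectedSpace A := totallyDisconnectedSpace_subtype_iff.2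
    fun t htA => isTotallyDisconnected_cantorSet t (htA.trans hAC)
  obtain ⟨y, hy⟩ : ∃ y, ((n + 1 : ℕ) : ℕ∞) ≤ (f ⁻¹' {y}).encard := by
    by_contra! h
    exact hdim (covDimLE_of_encard_fiber_le hf hsurj fun y => Order.le_of_lt_add_one (h y))
  obtain ⟨x, -⟩ := Fin.Embedding.exists_embedding_disjoint_range_of_add_le_ENat_card
    (n := n + 1) (s := (∅ : Set (f ⁻¹' {y}))) (by rwa [ncard_empty, Nat.cast_zero, zero_add])
  exact ⟨fun i => x i, Subtype.val_injective.comp x.injective,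
    fun i j => (x i).2.trans (x j).2.symm⟩
end
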